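/- The map $\phi_4 : \mathrm{SL}(2,\mathbb{R}) \times \mathrm{SL}(2,\mathbb{R}) \to \mathrm{GL}(4,\mathbb{R})$ is a group homomorphism whose kernel is $\{(\mathbb{1},\mathbb{1}), (-\mathbb{1},-\mathbb{1})\}$. -/
import Mathlib
set_option maxHeartbeats 1000000


open Matrix

/-- The map `φ₄ : SL(2,ℝ) × SL(2,ℝ) → GL(4,ℝ)` (as a matrix). -/
noncomputable def phi4 (γ₁ γ₂ : Matrix.SpecialLinearGroup (Fin 2) ℝ) :
    Matrix (Fin 4) (Fin 4) ℝ :=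
  let a₁ := γ₁.1 0 0; let b₁ := γ₁.1 0 1; let c₁ := γ₁.1 1 0; let d₁ := γ₁.1 1 1
  let a₂ := γ₂.1 0 0; let b₂ := γ₂.1 0 1; let c₂ := γ₂.1 1 0; let d₂ := γ₂.1 1 1
  !![a₁*a₂, a₁*b₂, a₂*b₁, b₁*b₂;
     a₁*c₂, a₁*d₂, b₁*c₂, b₁*d₂;
     a₂*c₁, b₂*c₁, a₂*d₁, b₂*d₁;
     c₁*c₂, c₁*d₂, c₂*d₁, d₁*d₂]

/-- `φ₄` is a group homomorphism with kernel `{(1,1), (-1,-1)}`. -/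
theorem phi4_hom_and_kernel :
    (∀ γ₁ γ₂ δ₁ δ₂ : Matrix.SpecialLinearGroup (Fin 2) ℝ,
      phi4 (γ₁ * δ₁) (γ₂ * δ₂) = phi4 γ₁ γ₂ * phi4 δ₁ δ₂) ∧
    (∀ γ₁ γ₂ : Matrix.SpecialLinearGroup (Fin 2) ℝ,
      phi4 γ₁ γ₂ = 1 ↔ (γ₁ = 1 ∧ γ₂ = 1) ∨ (γ₁ = -1 ∧ γ₂ = -1)) := by
  constructor
  · intro γ₁ γ₂ δ₁ δ₂
    ext i j
    fin_cases i <;> fin_cases j <;>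
      simp [phi4, Matrix.mul_apply, Fin.sum_univ_four, Fin.sum_univ_two,
        Matrix.SpecialLinearGroup.coe_mul] <;> ring
  · intro γ₁ γ₂
    constructor
    · intro h
      have det1 : γ₁.1 0 0 * γ₁.1 1 1 - γ₁.1 0 1 * γ₁.1 1 0 = 1 := by
        have := γ₁.2; rw [Matrix.det_fin_two] at this; exact this
      have det2 : γ₂.1 0 0 * γ₂.1 1 1 - γ₂.1 0 1 * γ₂.1 1 0 = 1 := by
        have := γ₂.2; rw [Matrix.det_fin_two] at this; exact this
      have h00 : γ₁.1 0 0 * γ₂.1 0 0 = 1 := by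
        have := congrFun (congrFun h 0) 0; simpa [phi4, Matrix.one_apply] using this
      have h01 : γ₁.1 0 0 * γ₂.1 0 1 = 0 := by
        have := congrFun (congrFun h 0) 1; simpa [phi4, Matrix.one_apply] using this
      have h02 : γ₂.1 0 0 * γ₁.1 0 1 = 0 := by
        have := congrFun (congrFun h 0) 2; simpa [phi4, Matrix.one_apply] using this
      have h10 : γ₁.1 0 0 * γ₂.1 1 0 = 0 := by
        have := congrFun (congrFun h 1) 0; simpa [phi4, Matrix.one_apply] using this
      have h11 : γ₁.1 0 0 * γ₂.1 1 1 = 1 := by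
        have := congrFun (congrFun h 1) 1; simpa [phi4, Matrix.one_apply] using this
      have h20 : γ₂.1 0 0 * γ₁.1 1 0 = 0 := by
        have := congrFun (congrFun h 2) 0; simpa [phi4, Matrix.one_apply] using this
      have ha₁ : γ₁.1 0 0 ≠ 0 := left_ne_zero_of_mul_eq_one h00
      have ha₂ : γ₂.1 0 0 ≠ 0 := right_ne_zero_of_mul_eq_one h00
      have hb₂ : γ₂.1 0 1 = 0 := by
        rcases mul_eq_zero.1 h01 with h' | h'; exact absurd h' ha₁; exact h'
      have hc₂ : γ₂.1 1 0 = 0 := by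
        rcases mul_eq_zero.1 h10 with h' | h'; exact absurd h' ha₁; exact h'
      have hb₁ : γ₁.1 0 1 = 0 := by
        rcases mul_eq_zero.1 h02 with h' | h'; exact absurd h' ha₂; exact h'
      have hc₁ : γ₁.1 1 0 = 0 := by
        rcases mul_eq_zero.1 h20 with h' | h'; exact absurd h' ha₂; exact h'
      rw [hb₂, hc₂] at det2
      rw [hb₁, hc₁] at det1
      -- d₂ = a₂
      have hda : γ₂.1 1 1 = γ₂.1 0 0 :=
        mul_left_cancel₀ ha₁ (h11.trans h00.symm)
      have hsq : γ₂.1 0 0 * γ₂.1 0 0 = 1 := by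
        have : γ₂.1 0 0 * γ₂.1 1 1 = 1 := by linarith
        rwa [hda] at this
      have ha1val : γ₁.1 0 0 = γ₂.1 0 0 := by
        have h1 : γ₁.1 0 0 * γ₂.1 0 0 = γ₂.1 0 0 * γ₂.1 0 0 := h00.trans hsq.symm
        exact mul_right_cancel₀ ha₂ h1
      have hd1 : γ₁.1 1 1 = γ₂.1 0 0 := by
        have : γ₁.1 0 0 * γ₁.1 1 1 = 1 := by linarith
        rw [ha1val] at this
        have h1 : γ₂.1 0 0 * γ₁.1 1 1 = γ₂.1 0 0 * γ₂.1 0 0 := this.trans hsq.symm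
        exact mul_left_cancel₀ ha₂ h1
      rcases mul_self_eq_one_iff.1 hsq with hone | hneg
      · left
        constructor <;> apply Subtype.ext <;> ext i j <;> fin_cases i <;> fin_cases j <;>
          simp_all [Matrix.one_apply]
      · right
        constructor <;> apply Subtype.ext <;> ext i j <;> fin_cases i <;> fin_cases j <;>
          simp_all [Matrix.one_apply]
    · rintro (⟨rfl, rfl⟩ | ⟨rfl, rfl⟩) <;> ext i j <;> fin_cases i <;> fin_cases j <;>
        simp [phi4, Matrix.one_apply, Matrix.vecHead, Matrix.vecTail]
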